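/- Let 𝔎 = (K, R, ⋆, {0}) be a frame whose identity set is the singleton {0}. Then 𝔎 is a CR-frame satisfying (left reflection) if and only if Cm(𝔎) is a dense commutative relation algebra. -/

import Mathlib

/-!
Every operation of `Cm(𝔎)` is the union of its values on singletons, so each relation-algebra
axiom, density and commutativity of `Cm(𝔎)` is equivalent to the same law tested on points:
a first-order condition on `R` and `⋆`. Commutativity of `R` (which both sides provide, by p1–p2
on the frame side) makes these pointwise laws interchangeable with p1–p5 and left reflection:
associativity becomes p2, the right identity becomes p1, and the rotation `R a b c ↔ R a ⋆c ⋆b`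
of p5 is left reflection followed by the converse law `R a b c ↔ R ⋆b ⋆a ⋆c`.
-/

/-- Composition in the complex algebra of a frame. -/
def scomp {K : Type*} (R : K → K → K → Prop) (X Y : Set K) : Set K :=
  {z | ∃ x ∈ X, ∃ y ∈ Y, R x y z}

/-- Converse in the complex algebra of a frame. -/
def sconv {K : Type*} (s : K → K) (X : Set K) : Set K := s '' X

/-- The complex algebra of the frame `(K, R, ⋆, I)` is a relation algebra. -/
def CmRA {K : Type*} (R : K → K → K → Prop) (s : K → K) (I : Set K) : Prop :=
  (∀ X Y Z : Set K, scomp R (X ∪ Y) Z = scomp R X Z ∪ scomp R Y Z) ∧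
  (∀ X : Set K, scomp R X I = X) ∧
  (∀ X : Set K, sconv s (sconv s X) = X) ∧
  (∀ X Y : Set K, sconv s (X ∪ Y) = sconv s X ∪ sconv s Y) ∧
  (∀ X Y : Set K, sconv s (scomp R X Y) = scomp R (sconv s Y) (sconv s X)) ∧
  (∀ X Y : Set K, scomp R (sconv s X) (scomp R X Y)ᶜ ⊆ Yᶜ) ∧
  (∀ X Y Z : Set K, scomp R X (scomp R Y Z) = scomp R (scomp R X Y) Z)

/-- `(K, R, ⋆, {z0})` is a CR-frame: postulates p1–p5 of Meyer and Routley. -/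
def CRFrame {K : Type*} (R : K → K → K → Prop) (s : K → K) (z0 : K) : Prop :=
  (∀ a b : K, R z0 a b ↔ a = b) ∧
  (∀ a b c d : K, (∃ x, R a b x ∧ R x c d) ↔ (∃ y, R a c y ∧ R y b d)) ∧
  (∀ a : K, R a a a) ∧
  (∀ a : K, s (s a) = a) ∧
  (∀ a b c : K, R a b c ↔ R a (s c) (s b))

/-- Frame condition (left reflection). -/
def LeftRefl {K : Type*} (R : K → K → K → Prop) (s : K → K) : Prop :=
  ∀ x y z, R x y z → R (s x) z y

open Function

section ComplexAlgebra

variable {K : Type*} {R : K → K → K → Prop} {s : K → K}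

theorem mem_scomp {X Y : Set K} {z : K} : z ∈ scomp R X Y ↔ ∃ x ∈ X, ∃ y ∈ Y, R x y z :=
  Iff.rfl

@[simp]
theorem mem_scomp_singleton {a b z : K} : z ∈ scomp R {a} {b} ↔ R a b z := by
  simp [mem_scomp]

@[simp]
theorem sconv_singleton (a : K) : sconv s {a} = {s a} :=
  Set.image_singleton

variable (R) in
theorem scomp_union_left (X Y Z : Set K) :
    scomp R (X ∪ Y) Z = scomp R X Z ∪ scomp R Y Z := by
  ext z
  simp only [mem_scomp, Set.mem_union, or_and_right, exists_or]

variable (s) in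
theorem sconv_union (X Y : Set K) : sconv s (X ∪ Y) = sconv s X ∪ sconv s Y :=
  Set.image_union s X Y

theorem scomp_comm_iff :
    (∀ X Y : Set K, scomp R X Y = scomp R Y X) ↔ ∀ a b c, R a b c → R b a c := by
  refine ⟨fun h a b c hr => ?_, fun h X Y => ?_⟩
  · have hab := Set.ext_iff.1 (h {a} {b}) c
    rw [mem_scomp_singleton, mem_scomp_singleton] at hab
    exact hab.1 hr
  · ext z
    exact ⟨fun ⟨x, hx, y, hy, hr⟩ => ⟨y, hy, x, hx, h x y z hr⟩,
      fun ⟨y, hy, x, hx, hr⟩ => ⟨x, hx, y, hy, h y x z hr⟩⟩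

theorem subset_scomp_self_iff : (∀ X : Set K, X ⊆ scomp R X X) ↔ ∀ a, R a a a :=
  ⟨fun h a => mem_scomp_singleton.1 (h {a} rfl), fun h _ a ha => ⟨a, ha, a, ha, h a⟩⟩

theorem scomp_singleton_right_iff (e : K) :
    (∀ X : Set K, scomp R X {e} = X) ↔ ∀ a b, R a e b ↔ a = b := by
  refine ⟨fun h a b => ?_, fun h X => ?_⟩
  · have hab := Set.ext_iff.1 (h {a}) b
    rwa [mem_scomp_singleton, Set.mem_singleton_iff, eq_comm] at hab
  · ext z
    simp [mem_scomp, h]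

theorem sconv_sconv_iff : (∀ X : Set K, sconv s (sconv s X) = X) ↔ Involutive s := by
  refine ⟨fun h a => ?_, fun h X => ?_⟩
  · simpa using h {a}
  · simp only [sconv, Set.image_image, h _, Set.image_id']

theorem sconv_scomp_iff (hs : Involutive s) :
    (∀ X Y : Set K, sconv s (scomp R X Y) = scomp R (sconv s Y) (sconv s X)) ↔
      ∀ a b c, R a b c ↔ R (s b) (s a) (s c) := by
  refine ⟨fun h a b c => ?_, fun h X Y => ?_⟩
  · have := Set.ext_iff.1 (h {a} {b}) (s c)
    rwa [sconv, hs.injective.mem_set_image, sconv_singleton, sconv_singleton,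
      mem_scomp_singleton, mem_scomp_singleton] at this
  · ext z
    conv_lhs => rw [← hs z, sconv, hs.injective.mem_set_image]
    simp only [sconv, mem_scomp, Set.exists_mem_image]
    refine ⟨fun ⟨x, hx, y, hy, hr⟩ => ⟨y, hy, x, hx, ?_⟩,
      fun ⟨y, hy, x, hx, hr⟩ => ⟨x, hx, y, hy, ?_⟩⟩
    · simpa [hs z] using (h x y (s z)).1 hr
    · exact (h x y (s z)).2 (by rwa [hs z])

theorem scomp_sconv_compl_subset_iff :
    (∀ X Y : Set K, scomp R (sconv s X) (scomp R X Y)ᶜ ⊆ Yᶜ) ↔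
      ∀ a b c, R (s a) b c → R a c b := by
  refine ⟨fun h a b c hr => ?_, fun h X Y => ?_⟩
  · by_contra hn
    exact h {a} {c} ⟨s a, ⟨a, rfl, rfl⟩, b, fun hb => hn (mem_scomp_singleton.1 hb), hr⟩ rfl
  · rintro c ⟨_, ⟨a, ha, rfl⟩, b, hb, hr⟩ hc
    exact hb ⟨a, ha, c, hc, h a b c hr⟩

theorem scomp_assoc_iff :
    (∀ X Y Z : Set K, scomp R X (scomp R Y Z) = scomp R (scomp R X Y) Z) ↔
      ∀ a b c d, (∃ x, R b c x ∧ R a x d) ↔ ∃ x, R a b x ∧ R x c d := by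
  refine ⟨fun h a b c d => ?_, fun h X Y Z => ?_⟩
  · simpa [mem_scomp] using Set.ext_iff.1 (h {a} {b} {c}) d
  · ext d
    constructor
    · rintro ⟨a, ha, x, ⟨b, hb, c, hc, hbc⟩, hax⟩
      obtain ⟨y, hab, hyc⟩ := (h a b c d).1 ⟨x, hbc, hax⟩
      exact ⟨y, ⟨a, ha, b, hb, hab⟩, c, hc, hyc⟩
    · rintro ⟨y, ⟨a, ha, b, hb, hab⟩, c, hc, hyc⟩
      obtain ⟨x, hbc, hax⟩ := (h a b c d).2 ⟨y, hab, hyc⟩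
      exact ⟨a, ha, x, ⟨b, hb, c, hc, hbc⟩, hax⟩

end ComplexAlgebra

section Frame

variable {K : Type*} {R : K → K → K → Prop} {s : K → K} {z0 : K}

theorem leftRefl_iff (hs : Involutive s) :
    LeftRefl R s ↔ ∀ a b c, R (s a) b c → R a c b :=
  ⟨fun hL a b c hr => hs a ▸ hL (s a) b c hr,
    fun h x y z hr => h (s x) y z (by rwa [hs x])⟩

namespace CRFrame

theorem rel_comm (hF : CRFrame R s z0) (a b c : K) : R a b c → R b a c := by
  intro hr
  obtain ⟨y, hby, hyac⟩ := (hF.2.1 z0 a b c).1 ⟨a, (hF.1 a a).2 rfl, hr⟩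
  rwa [← (hF.1 b y).1 hby] at hyac

theorem rel_zero_right (hF : CRFrame R s z0) (a b : K) : R a z0 b ↔ a = b :=
  ⟨fun hr => (hF.1 a b).1 (hF.rel_comm _ _ _ hr), fun e => hF.rel_comm _ _ _ ((hF.1 a b).2 e)⟩

theorem assoc (hF : CRFrame R s z0) (a b c d : K) :
    (∃ x, R b c x ∧ R a x d) ↔ ∃ x, R a b x ∧ R x c d :=
  calc (∃ x, R b c x ∧ R a x d) ↔ ∃ x, R b c x ∧ R x a d :=
        exists_congr fun _ => and_congr_right' ⟨hF.rel_comm _ _ _, hF.rel_comm _ _ _⟩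
    _ ↔ ∃ y, R b a y ∧ R y c d := hF.2.1 b c a d
    _ ↔ ∃ y, R a b y ∧ R y c d :=
        exists_congr fun _ => and_congr_left' ⟨hF.rel_comm _ _ _, hF.rel_comm _ _ _⟩

theorem rel_iff_rel_star_swap (hF : CRFrame R s z0) (hL : LeftRefl R s) (a b c : K) :
    R a b c ↔ R (s b) (s a) (s c) := by
  have star : ∀ a b c, R a b c → R (s b) (s a) (s c) := fun a b c hr =>
    hL b (s c) (s a) ((hF.2.2.2.2 b a c).1 (hF.rel_comm a b c hr))
  refine ⟨star a b c, fun hr => ?_⟩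
  simpa only [hF.2.2.2.1 _] using star _ _ _ hr

end CRFrame

theorem CRFrame.of_comm (hcomm : ∀ a b c, R a b c → R b a c)
    (hunit : ∀ a b, R a z0 b ↔ a = b)
    (hassoc : ∀ a b c d, (∃ x, R b c x ∧ R a x d) ↔ ∃ x, R a b x ∧ R x c d)
    (hdense : ∀ a, R a a a) (hs : Involutive s)
    (hconv : ∀ a b c, R a b c ↔ R (s b) (s a) (s c)) (hL : LeftRefl R s) :
    CRFrame R s z0 := by
  have rotate : ∀ a b c, R a b c → R a (s c) (s b) := fun a b c hr => by
    simpa only [hs a] using (hconv c (s a) b).1 (hcomm _ _ _ (hL a b c hr))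
  refine ⟨fun a b => ?_, fun a b c d => ?_, hdense, hs,
    fun a b c => ⟨rotate a b c, fun hr => ?_⟩⟩
  · exact ⟨fun hr => (hunit a b).1 (hcomm _ _ _ hr), fun e => hcomm _ _ _ ((hunit a b).2 e)⟩
  · rw [← hassoc, ← hassoc]
    exact exists_congr fun _ => and_congr_left' ⟨hcomm _ _ _, hcomm _ _ _⟩
  · simpa only [hs _] using rotate _ _ _ hr

end Frame

/-- Theorem thm8a(i): a frame with identity set `{z0}` is a CR-frame satisfying
(left reflection) iff its complex algebra is a dense commutative relation algebra. -/
theorem crframe_iff_dense_comm_RA {K : Type*} (R : K → K → K → Prop)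
    (s : K → K) (z0 : K) :
    (CRFrame R s z0 ∧ LeftRefl R s) ↔
      (CmRA R s ({z0} : Set K) ∧
        (∀ X : Set K, X ⊆ scomp R X X) ∧
        (∀ X Y : Set K, scomp R X Y = scomp R Y X)) := by
  constructor
  · rintro ⟨hF, hL⟩
    have hs : Involutive s := hF.2.2.2.1
    exact ⟨⟨scomp_union_left R, (scomp_singleton_right_iff z0).2 hF.rel_zero_right,
      sconv_sconv_iff.2 hs, sconv_union s, (sconv_scomp_iff hs).2 (hF.rel_iff_rel_star_swap hL),
      scomp_sconv_compl_subset_iff.2 ((leftRefl_iff hs).1 hL), scomp_assoc_iff.2 hF.assoc⟩,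
      subset_scomp_self_iff.2 hF.2.2.1, scomp_comm_iff.2 hF.rel_comm⟩
  · rintro ⟨⟨-, hunit, hinv, -, hconv, hrefl, hassoc⟩, hdense, hcomm⟩
    have hs : Involutive s := sconv_sconv_iff.1 hinv
    have hL : LeftRefl R s := (leftRefl_iff hs).2 (scomp_sconv_compl_subset_iff.1 hrefl)
    exact ⟨CRFrame.of_comm (scomp_comm_iff.1 hcomm) ((scomp_singleton_right_iff z0).1 hunit)
      (scomp_assoc_iff.1 hassoc) (subset_scomp_self_iff.1 hdense) hs
      ((sconv_scomp_iff hs).1 hconv) hL, hL⟩
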